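/- Let n ≥ 1, let S be a symmetric positive definite real n×n matrix, and let C ⊆ ℝⁿ be a nonempty closed convex set with 0 ∈ C. Then for every z ∈ ℝⁿ there exists a unique z̄ ∈ ℝⁿ such that ψ(z) = ½ ⟨S(z − z̄), z − z̄⟩ + h(z̄); moreover S(z − z̄) ∈ C and S(z − z̄) is the unique minimizer over C of the function q ↦ ⟨S⁻¹(q − S z), q − S z⟩. -/

import Mathlib

open Matrix
open scoped RealInnerProductSpace

/-- The support function `h(z) = sup_{q ∈ C} ⟨q, z⟩`, with values in `[0, +∞]` (extended reals). -/
noncomputable def hsupp {n : ℕ} (C : Set (EuclideanSpace ℝ (Fin n)))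
    (z : EuclideanSpace ℝ (Fin n)) : EReal :=
  ⨆ q ∈ C, ((⟪q, z⟫ : ℝ) : EReal)

/-- The infimal convolution
`ψ(z) = inf_{z'} { ½ ⟨S(z - z'), z - z'⟩ + h(z') }`. -/
noncomputable def psi {n : ℕ} (S : Matrix (Fin n) (Fin n) ℝ)
    (C : Set (EuclideanSpace ℝ (Fin n))) (z : EuclideanSpace ℝ (Fin n)) : EReal :=
  ⨅ z' : EuclideanSpace ℝ (Fin n),
    (((2⁻¹ * ⟪Matrix.toEuclideanLin S (z - z'), z - z'⟫ : ℝ) : EReal) + hsupp C z')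

/-!
Let `p` be the minimiser over `C` of the coercive quadratic `q ↦ ⟨S⁻¹(q - Sz), q - Sz⟩`; it is
unique and is characterised by the variational inequality `⟨S⁻¹(p - Sz), q - p⟩ ≥ 0` on `C`.
Put `z̄ := z - S⁻¹p`, so that `S(z - z̄) = p`. Since `S⁻¹(p - Sz) = -z̄`, the variational
inequality says that `p` attains the support function at `z̄`, and completing the square gives
`½⟨S(z - w), z - w⟩ + h(w) ≥ ½⟨S(z - z̄), z - z̄⟩ + h(z̄) + ½⟨S(w - z̄), w - z̄⟩` for every `w`.
Hence `z̄` is the unique minimiser in the definition of `ψ(z)`.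
-/

open Filter Topology

section QuadraticForm

variable {E : Type*} [NormedAddCommGroup E] [InnerProductSpace ℝ E] {A : E →ₗ[ℝ] E}

theorem LinearMap.IsSymmetric.inner_map_add_add_self (hA : A.IsSymmetric) (u v : E) :
    ⟪A (u + v), u + v⟫ = ⟪A u, u⟫ + 2 * ⟪A u, v⟫ + ⟪A v, v⟫ := by
  have hvu : ⟪A v, u⟫ = ⟪A u, v⟫ := by rw [hA, real_inner_comm]
  rw [map_add, inner_add_left, inner_add_right, inner_add_right, hvu]
  ring

theorem exists_pos_mul_norm_sq_le_inner_map [FiniteDimensional ℝ E]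
    (hA : ∀ x ≠ 0, 0 < ⟪A x, x⟫) : ∃ c > 0, ∀ x, c * ‖x‖ ^ 2 ≤ ⟪A x, x⟫ := by
  have hcont : Continuous fun x => ⟪A x, x⟫ :=
    A.continuous_of_finiteDimensional.inner continuous_id
  obtain ⟨c, hc, hcle⟩ := (isCompact_sphere (0 : E) 1).exists_forall_le' hcont.continuousOn
    fun x hx => hA x (ne_zero_of_mem_unit_sphere ⟨x, hx⟩)
  refine ⟨c, hc, fun x => ?_⟩
  rcases eq_or_ne x 0 with rfl | hx
  · simp
  have hnx : 0 < ‖x‖ := norm_pos_iff.2 hx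
  have hunit := hcle (‖x‖⁻¹ • x) (by simp [norm_smul, hnx.ne'])
  rw [map_smul, real_inner_smul_left, real_inner_smul_right] at hunit
  calc c * ‖x‖ ^ 2 ≤ ‖x‖⁻¹ * (‖x‖⁻¹ * ⟪A x, x⟫) * ‖x‖ ^ 2 := by gcongr
    _ = ⟪A x, x⟫ := by field_simp

theorem tendsto_inner_map_sub_sub_cocompact [FiniteDimensional ℝ E]
    (hA : ∀ x ≠ 0, 0 < ⟪A x, x⟫) (b : E) :
    Tendsto (fun q => ⟪A (q - b), q - b⟫) (cocompact E) atTop := by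
  obtain ⟨c, hc, hle⟩ := exists_pos_mul_norm_sq_le_inner_map hA
  have hnorm : Tendsto (fun q => ‖q - b‖) (cocompact E) atTop :=
    tendsto_norm_cocompact_atTop.comp (Homeomorph.subRight b).isClosedEmbedding.tendsto_cocompact
  exact tendsto_atTop_mono (fun q => hle (q - b))
    ((tendsto_const_mul_pow_atTop two_ne_zero hc).comp hnorm)

theorem IsClosed.exists_isMinOn_inner_map_sub [FiniteDimensional ℝ E]
    (hA : ∀ x ≠ 0, 0 < ⟪A x, x⟫) {C : Set E} (hC : IsClosed C) (hCne : C.Nonempty) (b : E) :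
    ∃ p ∈ C, IsMinOn (fun q => ⟪A (q - b), q - b⟫) C p := by
  obtain ⟨q₀, hq₀⟩ := hCne
  have hcont : Continuous fun q => ⟪A (q - b), q - b⟫ :=
    (A.continuous_of_finiteDimensional.comp (continuous_sub_right b)).inner
      (continuous_sub_right b)
  exact hcont.continuousOn.exists_isMinOn' hC hq₀ <|
    ((tendsto_inner_map_sub_sub_cocompact hA b).eventually_ge_atTop _).filter_mono inf_le_left

theorem IsMinOn.inner_map_sub_nonneg (hA : A.IsSymmetric) {C : Set E} (hC : Convex ℝ C)
    {b p q : E} (hp : p ∈ C) (hq : q ∈ C) (hmin : IsMinOn (fun q => ⟪A (q - b), q - b⟫) C p) :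
    0 ≤ ⟪A (p - b), q - p⟫ := by
  have hstep : ∀ t ∈ Set.Ioc (0 : ℝ) 1, 0 ≤ 2 * ⟪A (p - b), q - p⟫ + t * ⟪A (q - p), q - p⟫ := by
    rintro t ⟨ht₀, ht₁⟩
    have hle : ⟪A (p - b), p - b⟫ ≤ ⟪A (p + t • (q - p) - b), p + t • (q - p) - b⟫ :=
      hmin (hC.add_smul_sub_mem hp hq ⟨ht₀.le, ht₁⟩)
    rw [show p + t • (q - p) - b = (p - b) + t • (q - p) by abel, hA.inner_map_add_add_self,
      map_smul, real_inner_smul_left, real_inner_smul_right, real_inner_smul_right] at hle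
    nlinarith
  have hlim : Tendsto (fun t : ℝ => 2 * ⟪A (p - b), q - p⟫ + t * ⟪A (q - p), q - p⟫)
      (𝓝[>] 0) (𝓝 (2 * ⟪A (p - b), q - p⟫)) := by
    refine Tendsto.mono_left ?_ nhdsWithin_le_nhds
    simpa using ((continuous_id.mul continuous_const).const_add _).tendsto (0 : ℝ)
  have := ge_of_tendsto hlim (eventually_of_mem (Ioc_mem_nhdsGT one_pos) hstep)
  linarith

theorem IsMinOn.eq_of_inner_map_sub_eq (hA : A.IsSymmetric) (hApos : ∀ x ≠ 0, 0 < ⟪A x, x⟫)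
    {C : Set E} (hC : Convex ℝ C) {b p q : E} (hp : p ∈ C) (hq : q ∈ C)
    (hmin : IsMinOn (fun q => ⟪A (q - b), q - b⟫) C p)
    (heq : ⟪A (q - b), q - b⟫ = ⟪A (p - b), p - b⟫) : q = p := by
  have hvi := hmin.inner_map_sub_nonneg hA hC hp hq
  have hexp := hA.inner_map_add_add_self (p - b) (q - p)
  rw [sub_add_sub_cancel'] at hexp
  by_contra hne
  have := hApos (q - p) (sub_ne_zero.2 hne)
  linarith

theorem LinearMap.IsSymmetric.inner_map_sub_sub_add_inner (hA : A.IsSymmetric) {z zb p : E}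
    (hzb : A (z - zb) = p) (w : E) :
    2⁻¹ * ⟪A (z - w), z - w⟫ + ⟪p, w⟫ =
      2⁻¹ * ⟪A (z - zb), z - zb⟫ + ⟪p, zb⟫ + 2⁻¹ * ⟪A (zb - w), zb - w⟫ := by
  have hexp := hA.inner_map_add_add_self (z - zb) (zb - w)
  have hcross : ⟪A (z - zb), zb - w⟫ = ⟪p, zb⟫ - ⟪p, w⟫ := by rw [hzb, inner_sub_right]
  rw [sub_add_sub_cancel] at hexp
  linarith

end QuadraticForm

namespace Matrix

variable {m 𝕜 : Type*} [RCLike 𝕜] [Fintype m] [DecidableEq m] {M : Matrix m m 𝕜}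

theorem toEuclideanLin_apply_toEuclideanLin_inv (hM : IsUnit M.det) (x : EuclideanSpace 𝕜 m) :
    toEuclideanLin M (toEuclideanLin M⁻¹ x) = x := by
  simp [toLpLin_apply, mulVec_mulVec, mul_nonsing_inv _ hM]

theorem toEuclideanLin_inv_apply_toEuclideanLin (hM : IsUnit M.det) (x : EuclideanSpace 𝕜 m) :
    toEuclideanLin M⁻¹ (toEuclideanLin M x) = x := by
  simp [toLpLin_apply, mulVec_mulVec, nonsing_inv_mul _ hM]

theorem PosDef.inner_toEuclideanLin_self_pos {S : Matrix m m ℝ} (hS : S.PosDef)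
    {x : EuclideanSpace ℝ m} (hx : x ≠ 0) : 0 < ⟪toEuclideanLin S x, x⟫ := by
  rw [EuclideanSpace.inner_eq_star_dotProduct]
  simpa [toLpLin_apply] using hS.dotProduct_mulVec_pos (x := x.ofLp) (by simpa using hx)

end Matrix

section InfimalConvolution

variable {n : ℕ} {C : Set (EuclideanSpace ℝ (Fin n))}

theorem inner_le_hsupp {q : EuclideanSpace ℝ (Fin n)} (hq : q ∈ C) (z : EuclideanSpace ℝ (Fin n)) :
    ((⟪q, z⟫ : ℝ) : EReal) ≤ hsupp C z :=
  le_iSup₂ (f := fun q (_ : q ∈ C) => ((⟪q, z⟫ : ℝ) : EReal)) q hq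

theorem IsMaxOn.hsupp_eq {p z : EuclideanSpace ℝ (Fin n)} (hp : p ∈ C)
    (hmax : IsMaxOn (fun q => ⟪q, z⟫) C p) : hsupp C z = ⟪p, z⟫ :=
  le_antisymm (iSup₂_le fun _ hq => EReal.coe_le_coe_iff.2 (hmax hq)) (inner_le_hsupp hp z)

theorem psi_eq_iff_of_isMaxOn {S : Matrix (Fin n) (Fin n) ℝ} (hS : S.PosDef)
    {z zb p : EuclideanSpace ℝ (Fin n)} (hp : p ∈ C) (hmax : IsMaxOn (fun q => ⟪q, zb⟫) C p)
    (hzb : toEuclideanLin S (z - zb) = p) (w : EuclideanSpace ℝ (Fin n)) :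
    psi S C z = ((2⁻¹ * ⟪toEuclideanLin S (z - w), z - w⟫ : ℝ) : EReal) + hsupp C w ↔
      w = zb := by
  have hsymm := isSymmetric_toEuclideanLin_iff.2 hS.1
  set c := 2⁻¹ * ⟪toEuclideanLin S (z - zb), z - zb⟫ + ⟪p, zb⟫
  have hat_zb : ((2⁻¹ * ⟪toEuclideanLin S (z - zb), z - zb⟫ : ℝ) : EReal) + hsupp C zb = c := by
    rw [hmax.hsupp_eq hp, ← EReal.coe_add]
  have hgrowth : ∀ w, ((c + 2⁻¹ * ⟪toEuclideanLin S (zb - w), zb - w⟫ : ℝ) : EReal) ≤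
      ((2⁻¹ * ⟪toEuclideanLin S (z - w), z - w⟫ : ℝ) : EReal) + hsupp C w := fun w =>
    calc ((c + 2⁻¹ * ⟪toEuclideanLin S (zb - w), zb - w⟫ : ℝ) : EReal)
        = ((2⁻¹ * ⟪toEuclideanLin S (z - w), z - w⟫ : ℝ) : EReal) + ((⟪p, w⟫ : ℝ) : EReal) := by
          rw [← EReal.coe_add, hsymm.inner_map_sub_sub_add_inner hzb]
      _ ≤ _ := add_le_add_right (inner_le_hsupp hp w) _
  have hsq_nonneg : ∀ x, 0 ≤ ⟪toEuclideanLin S x, x⟫ := fun x => by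
    rcases eq_or_ne x 0 with rfl | hx
    · simp
    · exact (hS.inner_toEuclideanLin_self_pos hx).le
  have hpsi : psi S C z = c := by
    refine le_antisymm (hat_zb ▸ iInf_le _ zb) (le_iInf fun w => le_trans ?_ (hgrowth w))
    exact EReal.coe_le_coe_iff.2 (by linarith [hsq_nonneg (zb - w)])
  refine ⟨fun hw => ?_, fun hw => hw ▸ hpsi.trans hat_zb.symm⟩
  have hle := hgrowth w
  rw [← hw, hpsi, EReal.coe_le_coe_iff] at hle
  by_contra hne
  linarith [hS.inner_toEuclideanLin_self_pos (sub_ne_zero.2 (Ne.symm hne))]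

end InfimalConvolution

theorem stmt17_general {n : ℕ} (S : Matrix (Fin n) (Fin n) ℝ) (hS : S.PosDef)
    (C : Set (EuclideanSpace ℝ (Fin n))) (hCne : C.Nonempty) (hCcl : IsClosed C)
    (hCco : Convex ℝ C)
    (z : EuclideanSpace ℝ (Fin n)) :
    (∃! zbar : EuclideanSpace ℝ (Fin n),
        psi S C z =
          ((2⁻¹ * ⟪Matrix.toEuclideanLin S (z - zbar), z - zbar⟫ : ℝ) : EReal) +
            hsupp C zbar) ∧
      ∀ zbar : EuclideanSpace ℝ (Fin n),
        psi S C z =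
            ((2⁻¹ * ⟪Matrix.toEuclideanLin S (z - zbar), z - zbar⟫ : ℝ) : EReal) +
              hsupp C zbar →
          Matrix.toEuclideanLin S (z - zbar) ∈ C ∧
          (∀ q ∈ C,
            ⟪Matrix.toEuclideanLin S⁻¹
                (Matrix.toEuclideanLin S (z - zbar) - Matrix.toEuclideanLin S z),
              Matrix.toEuclideanLin S (z - zbar) - Matrix.toEuclideanLin S z⟫ ≤
              ⟪Matrix.toEuclideanLin S⁻¹ (q - Matrix.toEuclideanLin S z),
                q - Matrix.toEuclideanLin S z⟫) ∧
          (∀ q ∈ C,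
            ⟪Matrix.toEuclideanLin S⁻¹ (q - Matrix.toEuclideanLin S z),
                q - Matrix.toEuclideanLin S z⟫ =
              ⟪Matrix.toEuclideanLin S⁻¹
                  (Matrix.toEuclideanLin S (z - zbar) - Matrix.toEuclideanLin S z),
                Matrix.toEuclideanLin S (z - zbar) - Matrix.toEuclideanLin S z⟫ →
              q = Matrix.toEuclideanLin S (z - zbar)) := by
  have hdet : IsUnit S.det := hS.det_pos.ne'.isUnit
  have hinv_symm := isSymmetric_toEuclideanLin_iff.2 hS.inv.1
  have hinv_pos := fun x (hx : x ≠ 0) => hS.inv.inner_toEuclideanLin_self_pos hx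
  obtain ⟨p, hpC, hpmin⟩ :=
    hCcl.exists_isMinOn_inner_map_sub hinv_pos hCne (toEuclideanLin S z)
  set zb := z - toEuclideanLin S⁻¹ p
  have hzb : toEuclideanLin S (z - zb) = p := by
    rw [sub_sub_cancel, toEuclideanLin_apply_toEuclideanLin_inv hdet]
  have hmax : IsMaxOn (fun q => ⟪q, zb⟫) C p := fun q hq => by
    have hvi := hpmin.inner_map_sub_nonneg hinv_symm hCco hpC hq
    have hresidual : toEuclideanLin S⁻¹ (p - toEuclideanLin S z) = -zb := by
      rw [map_sub, toEuclideanLin_inv_apply_toEuclideanLin hdet, neg_sub]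
    rw [hresidual, inner_neg_left, inner_sub_right, real_inner_comm q, real_inner_comm p] at hvi
    show ⟪q, zb⟫ ≤ ⟪p, zb⟫
    linarith
  have hpsi_iff := psi_eq_iff_of_isMaxOn hS hpC hmax hzb
  refine ⟨⟨zb, (hpsi_iff zb).2 rfl, fun w => (hpsi_iff w).1⟩, fun w hw => ?_⟩
  obtain rfl := (hpsi_iff w).1 hw
  rw [hzb]
  exact ⟨hpC, fun q hq => hpmin hq,
    fun q hq heq => hpmin.eq_of_inner_map_sub_eq hinv_symm hinv_pos hCco hpC hq heq⟩

theorem stmt17 {n : ℕ} (hn : 1 ≤ n) (S : Matrix (Fin n) (Fin n) ℝ) (hS : S.PosDef)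
    (C : Set (EuclideanSpace ℝ (Fin n))) (hCne : C.Nonempty) (hCcl : IsClosed C)
    (hCco : Convex ℝ C) (hC0 : (0 : EuclideanSpace ℝ (Fin n)) ∈ C)
    (z : EuclideanSpace ℝ (Fin n)) :
    (∃! zbar : EuclideanSpace ℝ (Fin n),
        psi S C z =
          ((2⁻¹ * ⟪Matrix.toEuclideanLin S (z - zbar), z - zbar⟫ : ℝ) : EReal) +
            hsupp C zbar) ∧
      ∀ zbar : EuclideanSpace ℝ (Fin n),
        psi S C z =
            ((2⁻¹ * ⟪Matrix.toEuclideanLin S (z - zbar), z - zbar⟫ : ℝ) : EReal) +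
              hsupp C zbar →
          Matrix.toEuclideanLin S (z - zbar) ∈ C ∧
          (∀ q ∈ C,
            ⟪Matrix.toEuclideanLin S⁻¹
                (Matrix.toEuclideanLin S (z - zbar) - Matrix.toEuclideanLin S z),
              Matrix.toEuclideanLin S (z - zbar) - Matrix.toEuclideanLin S z⟫ ≤
              ⟪Matrix.toEuclideanLin S⁻¹ (q - Matrix.toEuclideanLin S z),
                q - Matrix.toEuclideanLin S z⟫) ∧
          (∀ q ∈ C,
            ⟪Matrix.toEuclideanLin S⁻¹ (q - Matrix.toEuclideanLin S z),
                q - Matrix.toEuclideanLin S z⟫ =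
              ⟪Matrix.toEuclideanLin S⁻¹
                  (Matrix.toEuclideanLin S (z - zbar) - Matrix.toEuclideanLin S z),
                Matrix.toEuclideanLin S (z - zbar) - Matrix.toEuclideanLin S z⟫ →
              q = Matrix.toEuclideanLin S (z - zbar)) :=
  stmt17_general S hS C hCne hCcl hCco z
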